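/- arXiv:1801.02292 — 2 statements merged into one kernel-verified Lean document; each statement's English description precedes it below -/
import Mathlib

section
/- In the lower-bound construction, for m−k sites v₁,…,v_{m−k} placed consecutively close on a horizontal segment ℓ₁ ending at o and k sites u₁,…,u_k placed on a segment ℓ₂ starting at o with positive slope, with ‖v_{m−k}−o‖ ≪ ‖u₁−o‖, the following holds: for every κ with 1 ≤ κ ≤ min{k, m−k} and every set of κ consecutive sites v_i,…,v_{i+κ−1} on ℓ₁, there exists a point x (equidistant from v_i, v_{i+κ−1}, u_{k−κ}) whose k nearest sites among all m sites are exactly {v_i,…,v_{i+κ−1}, u₁,…,u_{k−κ}}; hence the order-k Voronoi diagram of the m sites has at least (m−k−κ+1) nonempty cells of this form for each κ, giving Ω(k(m−k)) cells in total. -/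
open Metric Set

noncomputable section

local notation "E" => EuclideanSpace ℝ (Fin 2)

/-!
Take `v j = j • (-1, 0)` and `u j = (R + j) • (1, 1)` with `R = m² + 1`. Along a line of sites
`t ↦ t • w`, the distance from a point `x` grows with `|t - c|`, where `c • w` is the foot of the
perpendicular from `x`. For a window `v i, …, v b`, choose `x` with foot at the window's centre on
the horizontal line, at the height making it equidistant from `v i` and `u q`, `q = k - κ`. Since
`R` dominates, the foot of `x` on the diagonal lies before every `u j`, so the sites no farther from
`x` than `v i` are exactly the window and `u 1, …, u q`.
-/

section FootOfPerpendicular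

variable {F : Type*} [NormedAddCommGroup F] [InnerProductSpace ℝ F] {p w : F} {c : ℝ}

theorem dist_smul_sq_of_inner_sub_smul_eq_zero (h : inner ℝ (p - c • w) w = 0) (t : ℝ) :
    dist p (t • w) ^ 2 = dist p (c • w) ^ 2 + ((t - c) * ‖w‖) ^ 2 := by
  have hsplit : p - t • w = (p - c • w) + (c - t) • w := by rw [sub_smul]; abel
  rw [dist_eq_norm, dist_eq_norm, hsplit, norm_add_sq_real, inner_smul_right, h, norm_smul,
    Real.norm_eq_abs, mul_pow, sq_abs]
  ring

theorem dist_smul_le_dist_smul_iff (h : inner ℝ (p - c • w) w = 0) (hw : w ≠ 0) {s t : ℝ} :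
    dist p (s • w) ≤ dist p (t • w) ↔ |s - c| ≤ |t - c| := by
  rw [← sq_le_sq₀ dist_nonneg dist_nonneg, dist_smul_sq_of_inner_sub_smul_eq_zero h s,
    dist_smul_sq_of_inner_sub_smul_eq_zero h t, add_le_add_iff_left, sq_le_sq, abs_mul, abs_mul,
    mul_le_mul_iff_left₀ (by positivity)]

end FootOfPerpendicular

theorem abs_sub_midpoint_le_iff {a b x : ℝ} :
    |x - (a + b) / 2| ≤ (b - a) / 2 ↔ x ∈ Icc a b := by
  rw [Real.Icc_eq_closedBall, mem_closedBall, Real.dist_eq]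

theorem injective_image_Icc_union {α : Type*} {v : ℕ → α} (hv : Function.Injective v) {A : Set α}
    (hA : ∀ j, v j ∉ A) {κ : ℕ} (hκ : 1 ≤ κ) :
    Function.Injective fun i => v '' Icc i (i + κ - 1) ∪ A := by
  have hle (i₁ i₂ : ℕ) (h : v '' Icc i₁ (i₁ + κ - 1) ∪ A = v '' Icc i₂ (i₂ + κ - 1) ∪ A) :
      i₂ ≤ i₁ := by
    have hmem : v i₁ ∈ v '' Icc i₂ (i₂ + κ - 1) ∪ A := h ▸ Or.inl ⟨i₁, ⟨le_rfl, by omega⟩, rfl⟩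
    rcases hmem with ⟨j, hj, hji⟩ | hA'
    · exact hv hji ▸ hj.1
    · exact absurd hA' (hA i₁)
  exact fun i₁ i₂ h => le_antisymm (hle _ _ h.symm) (hle _ _ h)

theorem dist_toLp_sq (a b a' b' : ℝ) :
    dist !₂[a, b] !₂[a', b'] ^ 2 = (a - a') ^ 2 + (b - b') ^ 2 := by
  rw [EuclideanSpace.dist_eq, Real.sq_sqrt (by positivity)]
  simp [Fin.sum_univ_two, Real.dist_eq, sq_abs]

theorem smul_toLp (t a b : ℝ) : t • !₂[a, b] = !₂[t * a, t * b] := by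
  ext i; fin_cases i <;> simp

theorem inner_sub_smul_horizontal (a b : ℝ) :
    inner ℝ (!₂[-a, b] - a • !₂[-1, 0]) !₂[-1, 0] = 0 := by
  simp [smul_toLp, EuclideanSpace.inner_eq_star_dotProduct]

theorem inner_sub_smul_diagonal (a b : ℝ) :
    inner ℝ (!₂[a, b] - ((a + b) / 2) • !₂[1, 1]) !₂[1, 1] = 0 := by
  simp [smul_toLp, EuclideanSpace.inner_eq_star_dotProduct]
  ring

theorem norm_toLp_one_one : ‖!₂[(1 : ℝ), 1]‖ = √2 := by
  simp [EuclideanSpace.norm_eq, Fin.sum_univ_two]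
  norm_num

def vSite (j : ℕ) : E := (j : ℝ) • !₂[-1, 0]

def uSite (R : ℝ) (j : ℕ) : E := (R + j) • !₂[1, 1]

theorem vSite_injective : Function.Injective vSite :=
  (smul_left_injective ℝ (by simp)).comp Nat.cast_injective

theorem vSite_ne_uSite {R : ℝ} (hR : 0 < R) (j j' : ℕ) : vSite j ≠ uSite R j' := fun h => by
  have := congrArg (· 0) h
  simp [vSite, uSite] at this
  linarith

theorem dist_vSite_zero (j : ℕ) : dist (vSite j) 0 = j := by
  simp [vSite, norm_smul, EuclideanSpace.norm_eq]

theorem dist_uSite_zero {R : ℝ} (hR : 0 ≤ R) (j : ℕ) : dist (uSite R j) 0 = (R + j) * √2 := by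
  rw [dist_zero_right, uSite, norm_smul, norm_toLp_one_one, Real.norm_of_nonneg (by positivity)]

def windowPoint (c a r : ℝ) : E := !₂[-c, ((c + r) ^ 2 + r ^ 2 - (a - c) ^ 2) / (2 * r)]

theorem dist_windowPoint_eq {c a r : ℝ} (hr : r ≠ 0) :
    dist (windowPoint c a r) (a • !₂[-1, 0]) = dist (windowPoint c a r) (r • !₂[1, 1]) := by
  rw [← sq_eq_sq₀ dist_nonneg dist_nonneg, windowPoint, smul_toLp, smul_toLp, dist_toLp_sq,
    dist_toLp_sq]
  field_simp
  ring

theorem windowPoint_diagonal_foot_le {c a r : ℝ} (hr : 0 < r) (hc : c ^ 2 ≤ r) :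
    (windowPoint c a r 0 + windowPoint c a r 1) / 2 ≤ (2 * r + 1) / 4 := by
  simp only [windowPoint, PiLp.toLp_apply, Matrix.cons_val_zero, Matrix.cons_val_one]
  have hy : ((c + r) ^ 2 + r ^ 2 - (a - c) ^ 2) / (2 * r) ≤ c + r + 1 / 2 := by
    rw [div_le_iff₀ (by positivity)]
    nlinarith [sq_nonneg (a - c)]
  linarith

theorem exists_point_dist_le_iff_mem_window {R : ℝ} {i b q : ℕ} (hib : i ≤ b)
    (hbR : (b : ℝ) ^ 2 ≤ R) (hqR : (q : ℝ) + 1 ≤ R) :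
    ∃ x : E, dist x (vSite b) = dist x (vSite i) ∧ dist x (uSite R q) = dist x (vSite i) ∧
      (∀ j, dist x (vSite j) ≤ dist x (vSite i) ↔ j ∈ Icc i b) ∧
      (∀ j, dist x (uSite R j) ≤ dist x (vSite i) ↔ j ≤ q) := by
  have hib' : (i : ℝ) ≤ b := by exact_mod_cast hib
  set c : ℝ := (i + b) / 2 with hc
  set r : ℝ := R + q with hr_def
  have hq0 : (0 : ℝ) ≤ q := Nat.cast_nonneg q
  have hr : 0 < r := by linarith
  have hcr : c ^ 2 ≤ r := by
    have : c ^ 2 ≤ (b : ℝ) ^ 2 := pow_le_pow_left₀ (by positivity) (by linarith) 2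
    linarith
  set x := windowPoint c i r
  set f := (x 0 + x 1) / 2
  have hv (s t : ℝ) : dist x (s • !₂[-1, 0]) ≤ dist x (t • !₂[-1, 0]) ↔ |s - c| ≤ |t - c| :=
    dist_smul_le_dist_smul_iff (inner_sub_smul_horizontal c _) (by simp)
  have hu (s t : ℝ) : dist x (s • !₂[1, 1]) ≤ dist x (t • !₂[1, 1]) ↔ |s - f| ≤ |t - f| :=
    dist_smul_le_dist_smul_iff (inner_sub_smul_diagonal _ _) (by simp)
  have hfR : f ≤ R := (windowPoint_diagonal_foot_le hr hcr).trans (by linarith)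
  have hwin (j : ℕ) : |(j : ℝ) - c| ≤ |(i : ℝ) - c| ↔ j ∈ Icc i b := by
    rw [show |(i : ℝ) - c| = (b - i) / 2 by rw [abs_of_nonpos (by linarith)]; ring,
      abs_sub_midpoint_le_iff]
    simp only [mem_Icc, Nat.cast_le]
  have heq : dist x (vSite i) = dist x (uSite R q) := dist_windowPoint_eq hr.ne'
  refine ⟨x, ?_, heq.symm, fun j => (hv j i).trans (hwin j), fun j => ?_⟩
  · have hbi : |(b : ℝ) - c| = |(i : ℝ) - c| := by
      rw [abs_of_nonneg (by linarith), abs_of_nonpos (by linarith)]; ring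
    exact le_antisymm ((hv b i).2 hbi.le) ((hv i b).2 hbi.ge)
  · have hj0 : (0 : ℝ) ≤ j := Nat.cast_nonneg j
    rw [heq]
    refine (hu (R + j) r).trans ?_
    rw [abs_of_nonneg (by linarith), abs_of_nonneg (by linarith), hr_def]
    simp only [sub_le_sub_iff_right, add_le_add_iff_left, Nat.cast_le]

theorem exists_point_nearest_window {R : ℝ} {i b q : ℕ} (hib : i ≤ b) (hbR : (b : ℝ) ^ 2 ≤ R)
    (hqR : (q : ℝ) + 1 ≤ R) :
    ∃ x : E, dist x (vSite i) = dist x (vSite b) ∧ dist x (vSite i) = dist x (uSite R q) ∧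
      ∀ a ∈ vSite '' Icc i b ∪ uSite R '' Icc 1 q, ∀ s ∈ range vSite ∪ uSite R '' Ici 1,
        s ∉ vSite '' Icc i b ∪ uSite R '' Icc 1 q → dist x a < dist x s := by
  obtain ⟨x, hb, hq, hv, hu⟩ := exists_point_dist_le_iff_mem_window hib hbR hqR
  have hin : ∀ a ∈ vSite '' Icc i b ∪ uSite R '' Icc 1 q, dist x a ≤ dist x (vSite i) := by
    rintro _ (⟨j, hj, rfl⟩ | ⟨j, hj, rfl⟩)
    exacts [(hv j).2 hj, (hu j).2 hj.2]
  refine ⟨x, hb.symm, hq.symm, ?_⟩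
  rintro a ha _ (⟨j, rfl⟩ | ⟨j, hj, rfl⟩) hs
  · exact (hin a ha).trans_lt (not_le.1 fun h => hs (Or.inl ⟨j, (hv j).1 h, rfl⟩))
  · exact (hin a ha).trans_lt (not_le.1 fun h => hs (Or.inr ⟨j, ⟨hj, (hu j).1 h⟩, rfl⟩))

theorem order_k_voronoi_lower_bound_construction_general (m k : ℕ) :
    ∃ (o : E) (v u : ℕ → E),
      -- the sites v 1, …, v (m-k) lie on a horizontal segment left of o
      (∀ i, 1 ≤ i → i ≤ m - k → (v i) 1 = o 1 ∧ (v i) 0 < o 0) ∧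
      -- ordered by increasing distance from o along ℓ₁
      (∀ i j, 1 ≤ i → i < j → j ≤ m - k → dist (v i) o < dist (v j) o) ∧
      -- the sites u 1, …, u k lie on a ray from o with positive slope
      (∃ w : E, 0 < w 0 ∧ 0 < w 1 ∧
        ∀ j, 1 ≤ j → j ≤ k → ∃ r : ℝ, 0 < r ∧ u j = o + r • w) ∧
      -- ordered by increasing distance from o along ℓ₂
      (∀ i j, 1 ≤ i → i < j → j ≤ k → dist (u i) o < dist (u j) o) ∧
      -- ‖v_{m-k} − o‖ ≪ ‖u₁ − o‖
      dist (v (m - k)) o < dist (u 1) o ∧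
      -- main claim: each window yields a nonempty order-k cell
      (∀ κ, 1 ≤ κ → κ ≤ min k (m - k) → ∀ i, 1 ≤ i → i + κ - 1 ≤ m - k →
        ∃ x : E,
          dist x (v i) = dist x (v (i + κ - 1)) ∧
          (1 ≤ k - κ → dist x (v i) = dist x (u (k - κ))) ∧
          (∀ a ∈ (v '' Set.Icc i (i + κ - 1)) ∪ (u '' Set.Icc 1 (k - κ)),
            ∀ b ∈ (v '' Set.Icc 1 (m - k)) ∪ (u '' Set.Icc 1 k),
              b ∉ (v '' Set.Icc i (i + κ - 1)) ∪ (u '' Set.Icc 1 (k - κ)) →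
                dist x a < dist x b)) ∧
      -- hence at least m-k-κ+1 distinct cells of this form for each κ
      (∀ κ, 1 ≤ κ → κ ≤ min k (m - k) →
        Set.InjOn
          (fun i => ((v '' Set.Icc i (i + κ - 1)) ∪ (u '' Set.Icc 1 (k - κ)) : Set E))
          (Set.Icc 1 (m - k - κ + 1))) := by
  set R : ℝ := m ^ 2 + 1 with hR
  have hR0 : 0 < R := by positivity
  have hvu (A : Set ℕ) (j : ℕ) : vSite j ∉ uSite R '' A := fun ⟨j', _, h⟩ =>
    vSite_ne_uSite hR0 j j' h.symm
  refine ⟨0, vSite, uSite R, fun i hi _ => ⟨by simp [vSite], by simp [vSite]; omega⟩, ?_,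
    ⟨!₂[1, 1], by simp, by simp, fun j _ _ => ⟨R + j, by positivity, (zero_add _).symm⟩⟩,
    ?_, ?_, ?_, fun κ hκ _ => (injective_image_Icc_union vSite_injective (hvu _) hκ).injOn⟩
  · intro i j _ hij _
    simp only [dist_vSite_zero]
    exact_mod_cast hij
  · intro i j _ hij _
    rw [dist_uSite_zero hR0.le, dist_uSite_zero hR0.le]
    gcongr
  · rw [dist_vSite_zero, dist_uSite_zero hR0.le, Nat.cast_one]
    calc ((m - k : ℕ) : ℝ) ≤ m := by exact_mod_cast Nat.sub_le m k
      _ < R + 1 := by nlinarith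
      _ ≤ (R + 1) * √2 := le_mul_of_one_le_right (by positivity) Real.one_lt_sqrt_two.le
  · intro κ hκ hκmin i _ hwin
    have hb : (i + κ - 1) ^ 2 ≤ m ^ 2 + 1 :=
      (Nat.pow_le_pow_left (by omega) 2).trans (Nat.le_succ _)
    have hq : k - κ ≤ m ^ 2 := (show k - κ ≤ m by omega).trans (Nat.le_self_pow two_ne_zero m)
    obtain ⟨x, hxb, hxq, hnear⟩ := exists_point_nearest_window (R := R)
      (show i ≤ i + κ - 1 by omega) (by rw [hR]; exact_mod_cast hb)
      (by rw [hR]; exact_mod_cast Nat.add_le_add_right hq 1)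
    exact ⟨x, hxb, fun _ => hxq, fun a ha s hs =>
      hnear a ha s (hs.imp (image_subset_range _ _ ·) (image_mono Icc_subset_Ici_self ·))⟩

/-- Lower-bound construction for the order-`k` Voronoi diagram in the Euclidean
plane. There exist a point `o`, sites `v 1, …, v (m-k)` on a horizontal segment
ending at `o` (left of `o`, ordered by increasing distance from `o`) and sites
`u 1, …, u k` on a ray from `o` of positive slope (ordered by increasing distance
from `o`), with `‖v (m-k) - o‖ < ‖u 1 - o‖`, such that: for every `κ` with
`1 ≤ κ ≤ min k (m-k)` and every window of `κ` consecutive sites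
`v i, …, v (i+κ-1)`, there is a point `x` (equidistant from `v i`, `v (i+κ-1)` and
`u (k-κ)`) whose `k` nearest sites among all `m` sites are exactly
`{v i, …, v (i+κ-1)} ∪ {u 1, …, u (k-κ)}`; moreover, for each `κ` these defining
`k`-sets are pairwise distinct over the `m-k-κ+1` admissible windows, so the
order-`k` Voronoi diagram has at least `m-k-κ+1` nonempty cells of this form for
each `κ`, i.e. `Ω(k(m-k))` cells in total. -/
theorem order_k_voronoi_lower_bound_construction (m k : ℕ) (hk : 1 ≤ k) (hkm : k < m) :
    ∃ (o : E) (v u : ℕ → E),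
      -- the sites v 1, …, v (m-k) lie on a horizontal segment left of o
      (∀ i, 1 ≤ i → i ≤ m - k → (v i) 1 = o 1 ∧ (v i) 0 < o 0) ∧
      -- ordered by increasing distance from o along ℓ₁
      (∀ i j, 1 ≤ i → i < j → j ≤ m - k → dist (v i) o < dist (v j) o) ∧
      -- the sites u 1, …, u k lie on a ray from o with positive slope
      (∃ w : E, 0 < w 0 ∧ 0 < w 1 ∧
        ∀ j, 1 ≤ j → j ≤ k → ∃ r : ℝ, 0 < r ∧ u j = o + r • w) ∧
      -- ordered by increasing distance from o along ℓ₂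
      (∀ i j, 1 ≤ i → i < j → j ≤ k → dist (u i) o < dist (u j) o) ∧
      -- ‖v_{m-k} − o‖ ≪ ‖u₁ − o‖
      dist (v (m - k)) o < dist (u 1) o ∧
      -- main claim: each window yields a nonempty order-k cell
      (∀ κ, 1 ≤ κ → κ ≤ min k (m - k) → ∀ i, 1 ≤ i → i + κ - 1 ≤ m - k →
        ∃ x : E,
          dist x (v i) = dist x (v (i + κ - 1)) ∧
          (1 ≤ k - κ → dist x (v i) = dist x (u (k - κ))) ∧
          (∀ a ∈ (v '' Set.Icc i (i + κ - 1)) ∪ (u '' Set.Icc 1 (k - κ)),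
            ∀ b ∈ (v '' Set.Icc 1 (m - k)) ∪ (u '' Set.Icc 1 k),
              b ∉ (v '' Set.Icc i (i + κ - 1)) ∪ (u '' Set.Icc 1 (k - κ)) →
                dist x a < dist x b)) ∧
      -- hence at least m-k-κ+1 distinct cells of this form for each κ
      (∀ κ, 1 ≤ κ → κ ≤ min k (m - k) →
        Set.InjOn
          (fun i => ((v '' Set.Icc i (i + κ - 1)) ∪ (u '' Set.Icc 1 (k - κ)) : Set E))
          (Set.Icc 1 (m - k - κ + 1))) :=
  order_k_voronoi_lower_bound_construction_general m k
end
end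

section
/- For a finite set S of m sites in a metric space and 1 ≤ k ≤ m−1, if two order-k Voronoi cells V₁ (of k-set S_k) and V₂ (of k-set S_k') are adjacent (their closures share a boundary point p that is equidistant from some s ∈ S_k \ S_k' and s' ∈ S_k' \ S_k and where the k nearest-site sets switch), then |S_k ∩ S_k'| = k − 1, i.e., adjacent order-k cells share exactly k−1 sites. -/
/-!
At a point `p` in the closures of both cells, every site leaving the `k`-set is at most as far
from `p` as every site entering it, and vice versa, so all these sites are equidistant from `p`.
General position then leaves `s` as the only site that leaves, whence `|Sk ∩ Sk'| = k - 1`.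
-/

open Metric Set

section OrderVoronoi

variable {X : Type*} [PseudoMetricSpace X]

def orderVoronoiCell (S T : Finset X) : Set X :=
  {x | ∀ t ∈ T, ∀ r ∈ S, r ∉ T → dist x t < dist x r}

theorem dist_le_of_mem_closure_orderVoronoiCell {S T : Finset X} {p t r : X}
    (hp : p ∈ closure (orderVoronoiCell S T)) (ht : t ∈ T) (hr : r ∈ S) (hrT : r ∉ T) :
    dist p t ≤ dist p r :=
  have hcell : orderVoronoiCell S T ⊆ {x | dist x t < dist x r} := fun _ hx => hx t ht r hr hrT
  closure_lt_subset_le (continuous_id.dist continuous_const) (continuous_id.dist continuous_const)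
    (closure_mono hcell hp)

theorem dist_eq_of_mem_closure_orderVoronoiCell_of_mem_sdiff [DecidableEq X]
    {S T T' : Finset X} {p t t' : X} (hT : T ⊆ S) (hT' : T' ⊆ S)
    (hp : p ∈ closure (orderVoronoiCell S T)) (hp' : p ∈ closure (orderVoronoiCell S T'))
    (ht : t ∈ T \ T') (ht' : t' ∈ T' \ T) :
    dist p t = dist p t' := by
  rw [Finset.mem_sdiff] at ht ht'
  exact le_antisymm (dist_le_of_mem_closure_orderVoronoiCell hp ht.1 (hT' ht'.1) ht'.2)
    (dist_le_of_mem_closure_orderVoronoiCell hp' ht'.1 (hT ht.1) ht.2)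

end OrderVoronoi

theorem adjacent_order_k_cells_share_k_sub_one_sites_general {X : Type*} [MetricSpace X] [DecidableEq X]
    (S Sk Sk' : Finset X) (k : ℕ)
    (hSkS : Sk ⊆ S) (hSk'S : Sk' ⊆ S)
    (hck : Sk.card = k)
    (p s s' : X)
    (hs : s ∈ Sk ∧ s ∉ Sk') (hs' : s' ∈ Sk' ∧ s' ∉ Sk)
    (hgen : ∀ a ∈ S, ∀ b ∈ S, a ≠ b → dist p a = dist p b →
      (a = s ∧ b = s') ∨ (a = s' ∧ b = s))
    (hp1 : p ∈ closure {x : X | ∀ t ∈ Sk, ∀ r ∈ S, r ∉ Sk → dist x t < dist x r})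
    (hp2 : p ∈ closure {x : X | ∀ t ∈ Sk', ∀ r ∈ S, r ∉ Sk' → dist x t < dist x r}) :
    (Sk ∩ Sk').card = k - 1 := by
  have hdiff : Sk \ Sk' = {s} := by
    refine Finset.eq_singleton_iff_unique_mem.mpr ⟨Finset.mem_sdiff.mpr hs, fun t ht => ?_⟩
    have htSk : t ∈ Sk := (Finset.mem_sdiff.mp ht).1
    have hts' : t ≠ s' := fun h => hs'.2 (h ▸ htSk)
    have hdist : dist p t = dist p s' :=
      dist_eq_of_mem_closure_orderVoronoiCell_of_mem_sdiff hSkS hSk'S hp1 hp2 ht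
        (Finset.mem_sdiff.mpr hs')
    rcases hgen t (hSkS htSk) s' (hSk'S hs'.1) hts' hdist with ⟨rfl, -⟩ | ⟨rfl, -⟩
    · rfl
    · exact absurd rfl hts'
  have hcard := Finset.card_inter_add_card_sdiff Sk Sk'
  rw [hdiff, Finset.card_singleton, hck] at hcard
  omega

/-- For a finite set `S` of `m` sites in a metric space and `1 ≤ k ≤ m-1`, if the
order-`k` Voronoi cells of the `k`-sets `Sk` and `Sk'` are adjacent — their closures
share a boundary point `p` equidistant from some `s ∈ Sk \ Sk'` and
`s' ∈ Sk' \ Sk`, where only the pair `(s, s')` is equidistant (general position) —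
then `|Sk ∩ Sk'| = k - 1`: adjacent order-`k` cells share exactly `k-1` sites. -/
theorem adjacent_order_k_cells_share_k_sub_one_sites {X : Type*} [MetricSpace X] [DecidableEq X]
    (S Sk Sk' : Finset X) (k : ℕ) (hk : 1 ≤ k) (hkm : k ≤ S.card - 1)
    (hSkS : Sk ⊆ S) (hSk'S : Sk' ⊆ S)
    (hck : Sk.card = k) (hck' : Sk'.card = k) (hne : Sk ≠ Sk')
    (p s s' : X)
    (hs : s ∈ Sk ∧ s ∉ Sk') (hs' : s' ∈ Sk' ∧ s' ∉ Sk)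
    (heq : dist p s = dist p s')
    (hgen : ∀ a ∈ S, ∀ b ∈ S, a ≠ b → dist p a = dist p b →
      (a = s ∧ b = s') ∨ (a = s' ∧ b = s))
    (hp1 : p ∈ closure {x : X | ∀ t ∈ Sk, ∀ r ∈ S, r ∉ Sk → dist x t < dist x r})
    (hp2 : p ∈ closure {x : X | ∀ t ∈ Sk', ∀ r ∈ S, r ∉ Sk' → dist x t < dist x r}) :
    (Sk ∩ Sk').card = k - 1 :=
  adjacent_order_k_cells_share_k_sub_one_sites_general S Sk Sk' k hSkS hSk'S hck p s s' hs hs' hgen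
    hp1 hp2
end
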